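/- arXiv:1309.0787 — 7 statements merged into one kernel-verified Lean document; each statement's English description precedes it below -/
import Mathlib

section
/- Let k ≥ 1 be an integer and α ∈ ℝ^k with α_i > 0 for all i, and set α_0 := Σ_{i=1}^k α_i. Then the Dirichlet weight w_α is integrable on T_k and ∫_{T_k} w_α(x) dx = (∏_{i=1}^k Γ(α_i)) / Γ(α_0), where Γ is the Gamma function. -/
open MeasureTheory

noncomputable section

/-- The simplex `T_k ⊆ ℝ^{k-1}`: nonnegative coordinates summing to at most 1. -/
def Tset (k : ℕ) : Set (Fin (k - 1) → ℝ) :=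
  {x | (∀ i, 0 ≤ x i) ∧ ∑ i, x i ≤ 1}

/-- The completed vector `x̄ ∈ ℝ^k`: first `k-1` coordinates are those of `x`,
the last coordinate is `1 - Σ x_i`. -/
def bar (k : ℕ) (x : Fin (k - 1) → ℝ) : Fin k → ℝ :=
  fun i => if h : (i : ℕ) < k - 1 then x ⟨i, h⟩ else 1 - ∑ j, x j

/-- The Dirichlet weight `w_α(x) = ∏ x̄_i^{α_i - 1}`. -/
def dirW (k : ℕ) (α : Fin k → ℝ) (x : Fin (k - 1) → ℝ) : ℝ :=
  ∏ i, bar k x i ^ (α i - 1)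

/-!
Peel off the first coordinate `t` of a point of the simplex `T_{n+2}`: the remaining coordinates
range over `(1 - t) • T_{n+1}`. After rescaling them by `1 - t` the Dirichlet weight factors as
`t ^ (α₀ - 1) * (1 - t) ^ (β - 1)` (with `β = α₁ + ⋯ + α_{n+1}`, Jacobian `(1 - t) ^ n`
included) times the weight of the tail of `α` on `T_{n+1}`. By Tonelli the integral is therefore
`B(α₀, β)` times the lower-dimensional one, and the Gamma quotients telescope. Working with the
lower Lebesgue integral makes integrability a by-product of the computation.
-/

open Set Module
open scoped ENNReal

theorem lintegral_eq_mul_lintegral_comp_smul {E : Type*} [NormedAddCommGroup E]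
    [NormedSpace ℝ E] [MeasurableSpace E] [BorelSpace E] [FiniteDimensional ℝ E]
    (μ : Measure E) [μ.IsAddHaarMeasure] (f : E → ℝ≥0∞) {r : ℝ} (hr : 0 < r) :
    ∫⁻ x, f x ∂μ = ENNReal.ofReal (r ^ finrank ℝ E) * ∫⁻ x, f (r • x) ∂μ := by
  have hrd : 0 < r ^ finrank ℝ E := pow_pos hr _
  have hmap : ∫⁻ x, f (r • x) ∂μ = ∫⁻ x, f x ∂(Measure.map (r • ·) μ) :=
    ((Homeomorph.smulOfNeZero r hr.ne').measurableEmbedding.lintegral_map f).symm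
  rw [hmap, Measure.map_addHaar_smul μ hr.ne', lintegral_smul_measure,
    abs_of_pos (inv_pos.2 hrd), smul_eq_mul, ← mul_assoc, ← ENNReal.ofReal_mul hrd.le,
    mul_inv_cancel₀ hrd.ne', ENNReal.ofReal_one, one_mul]

theorem lintegral_pi_fin_succ_eq_lintegral_cons {E : Type*} [MeasureSpace E]
    [SigmaFinite (volume : Measure E)] {n : ℕ} {f : (Fin (n + 1) → E) → ℝ≥0∞}
    (hf : Measurable f) :
    ∫⁻ x, f x = ∫⁻ t, ∫⁻ y, f (Fin.cons t y) := by
  have he := (volume_preserving_piFinSuccAbove (fun _ : Fin (n + 1) => E) 0).symm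
  rw [← he.lintegral_comp hf, Measure.volume_eq_prod]
  exact (lintegral_prod _ (hf.comp he.measurable).aemeasurable).trans
    (by simp [MeasurableEquiv.piFinSuccAbove_symm_apply, Fin.consEquiv])

theorem lintegral_Ioo_rpow_mul_one_sub_rpow {a b : ℝ} (ha : 0 < a) (hb : 0 < b) :
    ∫⁻ x in Ioo (0 : ℝ) 1, ENNReal.ofReal (x ^ (a - 1) * (1 - x) ^ (b - 1)) =
      ENNReal.ofReal (ProbabilityTheory.beta a b) := by
  have hB := ProbabilityTheory.beta_pos ha hb
  have h := ProbabilityTheory.lintegral_betaPDF_eq_one ha hb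
  simp_rw [ProbabilityTheory.lintegral_betaPDF, mul_assoc,
    ENNReal.ofReal_mul (one_div_pos.2 hB).le] at h
  rw [lintegral_const_mul' _ _ ENNReal.ofReal_ne_top, mul_comm] at h
  rw [ENNReal.eq_inv_of_mul_eq_one_left h, one_div, ENNReal.ofReal_inv_of_pos hB, inv_inv]

def multiBeta {k : ℕ} (α : Fin k → ℝ) : ℝ :=
  (∏ i, Real.Gamma (α i)) / Real.Gamma (∑ i, α i)

theorem multiBeta_nonneg {k : ℕ} {α : Fin k → ℝ} (hα : ∀ i, 0 ≤ α i) :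
    0 ≤ multiBeta α :=
  div_nonneg (Finset.prod_nonneg fun i _ => Real.Gamma_nonneg_of_nonneg (hα i))
    (Real.Gamma_nonneg_of_nonneg (Finset.sum_nonneg fun i _ => hα i))

theorem multiBeta_succ {n : ℕ} (α : Fin (n + 1) → ℝ)
    (h : Real.Gamma (∑ j : Fin n, α j.succ) ≠ 0) :
    multiBeta α =
      ProbabilityTheory.beta (α 0) (∑ j : Fin n, α j.succ) * multiBeta (Fin.tail α) := by
  simp only [multiBeta, ProbabilityTheory.beta, Fin.prod_univ_succ, Fin.sum_univ_succ, Fin.tail]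
  field_simp

section Simplex

variable {n : ℕ}

theorem bar_succ (x : Fin n → ℝ) : bar (n + 1) x = Fin.snoc x (1 - ∑ j, x j) := by
  funext i
  refine Fin.lastCases ?_ (fun j => ?_) i <;> simp [bar]

theorem mem_Tset_iff_bar_nonneg {x : Fin n → ℝ} :
    x ∈ Tset (n + 1) ↔ ∀ i, 0 ≤ bar (n + 1) x i := by
  simp [bar_succ, Fin.forall_fin_succ', Tset, and_comm]

theorem mem_Icc_of_mem_Tset {k : ℕ} {x : Fin (k - 1) → ℝ} (hx : x ∈ Tset k)
    (i : Fin (k - 1)) : x i ∈ Icc 0 1 :=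
  ⟨hx.1 i, (Finset.single_le_sum (fun j _ => hx.1 j) (Finset.mem_univ i)).trans hx.2⟩

theorem measurableSet_Tset (k : ℕ) : MeasurableSet (Tset k) :=
  (measurableSet_le measurable_const measurable_id).inter
    (measurableSet_le (Finset.measurable_sum _ fun i _ => measurable_pi_apply i) measurable_const)

theorem measurable_dirW (k : ℕ) (α : Fin k → ℝ) : Measurable (dirW k α) := by
  have hbar : ∀ i, Measurable fun x => bar k x i := fun i => by
    unfold bar
    split <;> fun_prop
  exact Finset.measurable_prod _ fun i _ => (hbar i).pow_const _

theorem dirW_nonneg (α : Fin (n + 1) → ℝ) {x : Fin n → ℝ} (hx : x ∈ Tset (n + 1)) :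
    0 ≤ dirW (n + 1) α x :=
  Finset.prod_nonneg fun i _ => Real.rpow_nonneg (mem_Tset_iff_bar_nonneg.1 hx i) _

theorem bar_cons_smul (t : ℝ) (z : Fin n → ℝ) :
    bar (n + 2) (Fin.cons t ((1 - t) • z)) = Fin.cons t ((1 - t) • bar (n + 1) z) := by
  rw [bar_succ, bar_succ, Fin.sum_cons, ← Fin.cons_snoc_eq_snoc_cons]
  congr 1
  funext i
  refine Fin.lastCases ?_ (fun j => ?_) i
  · simp only [Fin.snoc_last, Pi.smul_apply, smul_eq_mul, ← Finset.mul_sum]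
    ring
  · simp

theorem cons_smul_mem_Tset_iff {t : ℝ} (ht : t ∈ Ico 0 1) {z : Fin n → ℝ} :
    Fin.cons t ((1 - t) • z) ∈ Tset (n + 2) ↔ z ∈ Tset (n + 1) := by
  simp only [mem_Tset_iff_bar_nonneg, bar_cons_smul, Fin.forall_fin_succ, Fin.cons_zero,
    Fin.cons_succ, Pi.smul_apply, smul_eq_mul, mul_nonneg_iff_of_pos_left (sub_pos.2 ht.2),
    ht.1, true_and]

theorem dirW_cons_smul (α : Fin (n + 2) → ℝ) {t : ℝ} (ht : t < 1) {z : Fin n → ℝ}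
    (hz : z ∈ Tset (n + 1)) :
    dirW (n + 2) α (Fin.cons t ((1 - t) • z)) =
      t ^ (α 0 - 1) * (1 - t) ^ (∑ j : Fin (n + 1), (α j.succ - 1)) *
        dirW (n + 1) (Fin.tail α) z := by
  have hc : 0 < 1 - t := sub_pos.2 ht
  simp only [dirW, bar_cons_smul, Fin.prod_univ_succ, Fin.cons_zero, Fin.cons_succ,
    Pi.smul_apply, smul_eq_mul, Real.mul_rpow hc.le (mem_Tset_iff_bar_nonneg.1 hz _),
    Finset.prod_mul_distrib, Real.rpow_sum_of_pos hc, Fin.tail]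
  ring

theorem lintegral_indicator_dirW_cons (α : Fin (n + 2) → ℝ) {t : ℝ}
    (ht : t ∈ Ioo 0 1) :
    ∫⁻ y, (Tset (n + 2)).indicator (fun x => ENNReal.ofReal (dirW (n + 2) α x))
        (Fin.cons t y) =
      ENNReal.ofReal (t ^ (α 0 - 1) * (1 - t) ^ (∑ j : Fin (n + 1), α j.succ - 1)) *
        ∫⁻ z in Tset (n + 1), ENNReal.ofReal (dirW (n + 1) (Fin.tail α) z) := by
  have hc : 0 < 1 - t := sub_pos.2 ht.2
  set c := t ^ (α 0 - 1) * (1 - t) ^ (∑ j : Fin (n + 1), (α j.succ - 1))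
  have hc0 : 0 ≤ c := mul_nonneg (Real.rpow_nonneg ht.1.le _) (Real.rpow_nonneg hc.le _)
  have hslice : ∀ z, (Tset (n + 2)).indicator (fun x => ENNReal.ofReal (dirW (n + 2) α x))
      (Fin.cons t ((1 - t) • z)) =
        ENNReal.ofReal c *
          (Tset (n + 1)).indicator (fun z => ENNReal.ofReal (dirW (n + 1) (Fin.tail α) z)) z := by
    intro z
    by_cases hz : z ∈ Tset (n + 1)
    · rw [indicator_of_mem ((cons_smul_mem_Tset_iff (Ioo_subset_Ico_self ht)).2 hz),
        indicator_of_mem hz, dirW_cons_smul α ht.2 hz,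
        ENNReal.ofReal_mul hc0]
    · rw [indicator_of_notMem (mt (cons_smul_mem_Tset_iff (Ioo_subset_Ico_self ht)).1 hz),
        indicator_of_notMem hz, mul_zero]
  have hexp :
      (1 - t) ^ n * c = t ^ (α 0 - 1) * (1 - t) ^ (∑ j : Fin (n + 1), α j.succ - 1) := by
    have hS :
        (n : ℝ) + ∑ j : Fin (n + 1), (α j.succ - 1) = ∑ j : Fin (n + 1), α j.succ - 1 := by
      simp only [Finset.sum_sub_distrib, Finset.sum_const, Finset.card_univ, Fintype.card_fin,
        nsmul_eq_mul, mul_one, Nat.cast_add, Nat.cast_one]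
      ring
    rw [mul_left_comm, ← Real.rpow_natCast, ← Real.rpow_add hc, hS]
  rw [lintegral_eq_mul_lintegral_comp_smul volume _ hc, finrank_fin_fun,
    ← lintegral_indicator (measurableSet_Tset _)]
  simp_rw [hslice]
  rw [lintegral_const_mul' _ _ ENNReal.ofReal_ne_top, ← mul_assoc,
    ← ENNReal.ofReal_mul (pow_nonneg hc.le n), hexp]
  rfl

end Simplex

theorem lintegral_dirW (n : ℕ) {α : Fin (n + 1) → ℝ} (hα : ∀ i, 0 < α i) :
    ∫⁻ x in Tset (n + 1), ENNReal.ofReal (dirW (n + 1) α x) =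
      ENNReal.ofReal (multiBeta α) := by
  induction n with
  | zero =>
    have hT : Tset 1 = univ := by ext x; simp [Tset]
    have hW : ∀ x, dirW 1 α x = 1 := fun x => by simp [dirW, bar]
    simp [hT, hW, multiBeta, volume_pi, (Real.Gamma_pos_of_pos (hα 0)).ne']
  | succ n ih =>
    set β := ∑ j : Fin (n + 1), α j.succ
    have hβ : 0 < β := Finset.sum_pos (fun j _ => hα j.succ) Finset.univ_nonempty
    set F : (Fin (n + 1) → ℝ) → ℝ≥0∞ :=
      (Tset (n + 2)).indicator fun x => ENNReal.ofReal (dirW (n + 2) α x)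
    have hF : Measurable F :=
      (measurable_dirW _ α).ennreal_ofReal.indicator (measurableSet_Tset _)
    have hsupp : (Function.support fun t => ∫⁻ y, F (Fin.cons t y)) ⊆ Icc 0 1 :=
      Function.support_subset_iff'.2 fun t ht => by
        have hF0 : ∀ y, F (Fin.cons t y) = 0 := fun y => indicator_of_notMem
          (fun hx => ht (by simpa using mem_Icc_of_mem_Tset hx (0 : Fin (n + 1)))) _
        simp [hF0]
    calc ∫⁻ x in Tset (n + 2), ENNReal.ofReal (dirW (n + 2) α x)
        = ∫⁻ t in Ioo 0 1, ∫⁻ y, F (Fin.cons t y) := by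
          rw [← lintegral_indicator (measurableSet_Tset _)]
          exact (lintegral_pi_fin_succ_eq_lintegral_cons hF).trans <| by
            rw [← setLIntegral_eq_of_support_subset hsupp, setLIntegral_congr Ioo_ae_eq_Icc]
      _ = ∫⁻ t in Ioo 0 1, ENNReal.ofReal (t ^ (α 0 - 1) * (1 - t) ^ (β - 1)) *
            ENNReal.ofReal (multiBeta (Fin.tail α)) := by
          refine setLIntegral_congr_fun measurableSet_Ioo fun t ht => ?_
          rw [lintegral_indicator_dirW_cons α ht, ih (α := Fin.tail α) fun j => hα j.succ]
      _ = ENNReal.ofReal (multiBeta α) := by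
          rw [lintegral_mul_const' _ _ ENNReal.ofReal_ne_top,
            lintegral_Ioo_rpow_mul_one_sub_rpow (hα 0) hβ, ← ENNReal.ofReal_mul
              (ProbabilityTheory.beta_pos (hα 0) hβ).le,
            multiBeta_succ α (Real.Gamma_pos_of_pos hβ).ne']

/-- The Dirichlet weight is integrable on `T_k` and its integral is
`(∏ Γ(α_i)) / Γ(α_0)`. -/
theorem dirichlet_normalization (k : ℕ) (hk : 1 ≤ k) (α : Fin k → ℝ)
    (hα : ∀ i, 0 < α i) :
    IntegrableOn (dirW k α) (Tset k) volume ∧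
      ∫ x in Tset k, dirW k α x =
        (∏ i, Real.Gamma (α i)) / Real.Gamma (∑ i, α i) := by
  obtain ⟨n, rfl⟩ : ∃ n, k = n + 1 := ⟨k - 1, by omega⟩
  have hlint := lintegral_dirW n hα
  have hnonneg : 0 ≤ᵐ[volume.restrict (Tset (n + 1))] dirW (n + 1) α :=
    ae_restrict_of_forall_mem (measurableSet_Tset _) fun x hx => dirW_nonneg α hx
  have hmeas : AEStronglyMeasurable (dirW (n + 1) α) (volume.restrict (Tset (n + 1))) :=
    (measurable_dirW (n + 1) α).aestronglyMeasurable
  refine ⟨⟨hmeas, ?_⟩, ?_⟩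
  · rw [hasFiniteIntegral_iff_ofReal hnonneg, hlint]
    exact ENNReal.ofReal_lt_top
  · rw [integral_eq_lintegral_of_nonneg_ae hnonneg hmeas, hlint,
      ENNReal.toReal_ofReal (multiBeta_nonneg fun i => (hα i).le), multiBeta]
end
end

section
/- (Whitening orthonormalizes the latent components.) Let k ≤ n, let f_1, …, f_k ∈ ℝ^n be linearly independent, let α̂_1, …, α̂_k > 0 be reals, and let M := Σ_{i=1}^k α̂_i f_i f_iᵀ. If W ∈ ℝ^{n×k} satisfies Wᵀ M W = I_k, then the vectors v_i := √(α̂_i) · Wᵀ f_i, for i = 1, …, k, form an orthonormal basis of ℝ^k. -/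
open Matrix

/-!
Let `V` be the `k × k` matrix with rows `vᵢ`. Splitting `α̂ᵢ = √α̂ᵢ · √α̂ᵢ` gives
`Vᵀ V = Σᵢ vᵢ vᵢᵀ = Wᵀ M W = I`. A one-sided inverse of a square matrix is two-sided, so
`V Vᵀ = I` says that the rows are orthonormal, and `Vᵀ` being a left inverse of `V` makes
`x ↦ xᵀ V` surjective, i.e. the rows span.
-/

namespace Matrix

variable {l m n R : Type*} [Fintype m] [CommSemiring R]

theorem transpose_mul_self_eq_sum_vecMulVec (A : Matrix m n R) :
    Aᵀ * A = ∑ i, vecMulVec (A i) (A i) := by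
  ext p q
  simp only [mul_apply, transpose_apply, sum_apply, vecMulVec_apply]

theorem transpose_mul_vecMulVec_mul (W : Matrix m l R) (x y : m → R) :
    Wᵀ * vecMulVec x y * W = vecMulVec (Wᵀ *ᵥ x) (Wᵀ *ᵥ y) := by
  simp only [mul_vecMulVec, vecMulVec_mul, mulVec_transpose]

theorem span_row_eq_top_of_mul_eq_one [Fintype n] [DecidableEq n] {A : Matrix m n R}
    {B : Matrix n m R} (h : B * A = 1) : Submodule.span R (Set.range A.row) = ⊤ := by
  rw [← range_vecMulLinear, LinearMap.range_eq_top]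
  exact fun x => ⟨x ᵥ* B, by rw [vecMulLinear_apply, vecMul_vecMul, h, vecMul_one]⟩

end Matrix

theorem transpose_mul_sum_smul_vecMulVec_mul {k n l : Type*} [Fintype k] [Fintype n]
    (W : Matrix n l ℝ) (f : k → n → ℝ) (α : k → ℝ) (hα : ∀ i, 0 ≤ α i) :
    Wᵀ * (∑ i, α i • vecMulVec (f i) (f i)) * W =
      (of fun i => Real.sqrt (α i) • Wᵀ *ᵥ f i)ᵀ * of fun i => Real.sqrt (α i) • Wᵀ *ᵥ f i := by
  rw [transpose_mul_self_eq_sum_vecMulVec, Matrix.mul_sum, Matrix.sum_mul]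
  refine Finset.sum_congr rfl fun i _ => ?_
  rw [Matrix.mul_smul, Matrix.smul_mul, transpose_mul_vecMulVec_mul]
  change _ = vecMulVec (Real.sqrt (α i) • Wᵀ *ᵥ f i) (Real.sqrt (α i) • Wᵀ *ᵥ f i)
  rw [smul_vecMulVec, vecMulVec_smul, smul_smul, Real.mul_self_sqrt (hα i)]

theorem whitening_orthonormalizes_general (n k : ℕ)
    (f : Fin k → Fin n → ℝ)
    (α : Fin k → ℝ) (hα : ∀ i, 0 < α i)
    (W : Matrix (Fin n) (Fin k) ℝ)
    (hW : Wᵀ * (∑ i, α i • vecMulVec (f i) (f i)) * W = 1) :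
    (∀ i j, (Real.sqrt (α i) • Wᵀ.mulVec (f i)) ⬝ᵥ (Real.sqrt (α j) • Wᵀ.mulVec (f j)) =
        if i = j then 1 else 0) ∧
      Submodule.span ℝ (Set.range fun i => Real.sqrt (α i) • Wᵀ.mulVec (f i)) = ⊤ := by
  rw [transpose_mul_sum_smul_vecMulVec_mul W f α fun i => (hα i).le] at hW
  refine ⟨fun i j => ?_, span_row_eq_top_of_mul_eq_one hW⟩
  rw [← one_apply, ← mul_eq_one_comm.mp hW, mul_apply']
  rfl

/-- Whitening orthonormalizes the latent components: if `Wᵀ M W = I` for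
`M = Σ_i α̂_i f_i f_iᵀ` with `f_i` linearly independent and `α̂_i > 0`, then the
vectors `v_i = √α̂_i · Wᵀ f_i` form an orthonormal basis of `ℝ^k`. -/
theorem whitening_orthonormalizes (n k : ℕ) (hk : 0 < k) (hkn : k ≤ n)
    (f : Fin k → Fin n → ℝ) (hf : LinearIndependent ℝ f)
    (α : Fin k → ℝ) (hα : ∀ i, 0 < α i)
    (W : Matrix (Fin n) (Fin k) ℝ)
    (hW : Wᵀ * (∑ i, α i • vecMulVec (f i) (f i)) * W = 1) :
    (∀ i j, (Real.sqrt (α i) • Wᵀ.mulVec (f i)) ⬝ᵥ (Real.sqrt (α j) • Wᵀ.mulVec (f j)) =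
        if i = j then 1 else 0) ∧
      Submodule.span ℝ (Set.range fun i => Real.sqrt (α i) • Wᵀ.mulVec (f i)) = ⊤ :=
  whitening_orthonormalizes_general n k f α hα W hW
end

section
/- (Whitened third moment is orthogonally decomposable; correctness of the whitening + tensor decomposition pipeline.) Let k ≤ n, let f_1, …, f_k ∈ ℝ^n be linearly independent, let α̂_1, …, α̂_k > 0, let M := Σ_{i=1}^k α̂_i f_i f_iᵀ, and let W ∈ ℝ^{n×k} satisfy Wᵀ M W = I_k. Define the whitened tensor T by T_{pqr} := Σ_{i=1}^k α̂_i (Wᵀf_i)_p (Wᵀf_i)_q (Wᵀf_i)_r, and set v_i := √(α̂_i) Wᵀ f_i and λ_i := α̂_i^{−1/2}. Then for every j and every p: Σ_{q=1}^k Σ_{r=1}^k T_{pqr} v_j(q) v_j(r) = λ_j v_j(p); i.e., the v_j are orthonormal eigenvectors of T with eigenvalues λ_j = α̂_j^{−1/2}. -/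
open Matrix

/-!
Write `g i = Wᵀ f i ∈ ℝᵏ`. The whitening condition says `∑ i, α i • g i g iᵀ = 1`, that is
`Gᵀ D G = 1` for the square matrix `G` with rows `g i` and `D = diag α`; hence `G Gᵀ = D⁻¹`,
so the `g i` are orthogonal with `‖g i‖² = 1 / α i`. Contracting the tensor
`T = ∑ i, α i • g i ⊗ g i ⊗ g i` twice against `v = √(α j) • g j` then kills every summand but
the `j`-th, which is `α j (√(α j) / α j)² g j = g j = α j ^ (-1/2) • v`.
-/

section
variable {ι κ R : Type*} [Fintype ι]

theorem mul_sum_smul_vecMulVec_mul {l m n : Type*} [Fintype m] [CommSemiring R]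
    (L : Matrix l m R) (N : Matrix m n R) (α : ι → R) (x y : ι → m → R) :
    L * (∑ i, α i • vecMulVec (x i) (y i)) * N =
      ∑ i, α i • vecMulVec (L *ᵥ x i) (y i ᵥ* N) := by
  simp only [Matrix.mul_sum, Matrix.sum_mul, Matrix.mul_smul, Matrix.smul_mul, mul_vecMulVec,
    vecMulVec_mul]

theorem sum_smul_vecMulVec_self_eq [DecidableEq ι] [CommSemiring R] (α : ι → R)
    (g : ι → κ → R) :
    ∑ i, α i • vecMulVec (g i) (g i) = (of g)ᵀ * diagonal α * of g := by
  ext a b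
  rw [Matrix.mul_assoc, mul_apply]
  simp only [Matrix.sum_apply, Matrix.smul_apply, vecMulVec_apply, diagonal_mul,
    transpose_apply, of_apply, smul_eq_mul]
  exact Finset.sum_congr rfl fun i _ => by ring

theorem mul_transpose_eq_diagonal_inv_of_transpose_mul_diagonal_mul_eq_one
    [DecidableEq ι] {K : Type*} [Field K] {A : Matrix ι ι K} {α : ι → K}
    (hα : ∀ i, α i ≠ 0) (h : Aᵀ * diagonal α * A = 1) : A * Aᵀ = diagonal α⁻¹ := by
  have hDA : diagonal α * (A * Aᵀ) = 1 := by
    rw [← Matrix.mul_assoc]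
    exact mul_eq_one_comm.mp (by rwa [← Matrix.mul_assoc])
  have hinv : diagonal α⁻¹ * diagonal α = 1 := by
    rw [diagonal_mul_diagonal, ← diagonal_one]
    exact congrArg diagonal (funext fun i => inv_mul_cancel₀ (hα i))
  calc A * Aᵀ = diagonal α⁻¹ * diagonal α * (A * Aᵀ) := by rw [hinv, Matrix.one_mul]
    _ = diagonal α⁻¹ := by rw [Matrix.mul_assoc, hDA, Matrix.mul_one]

theorem dotProduct_eq_ite_of_sum_smul_vecMulVec_eq_one [DecidableEq ι] {K : Type*} [Field K]
    {α : ι → K} (hα : ∀ i, α i ≠ 0) {g : ι → ι → K}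
    (h : ∑ i, α i • vecMulVec (g i) (g i) = 1) (i j : ι) :
    g i ⬝ᵥ g j = if i = j then (α i)⁻¹ else 0 := by
  have hAAt := mul_transpose_eq_diagonal_inv_of_transpose_mul_diagonal_mul_eq_one hα
    (by rwa [← sum_smul_vecMulVec_self_eq])
  have hij := congrFun (congrFun hAAt i) j
  rw [mul_apply', diagonal_apply] at hij
  exact hij

theorem sum_sum_weightedCube_mul_mul [Fintype κ] [CommSemiring R] (α : ι → R)
    (g : ι → κ → R) (u : κ → R) (p : κ) :
    ∑ q, ∑ r, (∑ i, α i * g i p * g i q * g i r) * u q * u r =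
      ∑ i, α i * g i p * (g i ⬝ᵥ u) ^ 2 := by
  simp only [dotProduct, sq, Finset.sum_mul, Finset.mul_sum]
  rw [Finset.sum_comm_cycle]
  exact Finset.sum_congr rfl fun i _ => Finset.sum_congr rfl fun q _ =>
    Finset.sum_congr rfl fun r _ => by ring

theorem sum_weightedCube_dotProduct_smul_sq [DecidableEq ι] [Fintype κ] [CommSemiring R]
    (α c : ι → R) {g : ι → κ → R} (hg : ∀ i j, g i ⬝ᵥ g j = if i = j then c i else 0)
    (s : R) (j : ι) (p : κ) :
    ∑ i, α i * g i p * (g i ⬝ᵥ s • g j) ^ 2 = α j * (s * c j) ^ 2 * g j p := by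
  rw [Finset.sum_eq_single j (fun i _ hij => by simp [dotProduct_smul, hg, hij]) (by simp),
    dotProduct_smul, hg, if_pos rfl, smul_eq_mul]
  ring

end

theorem whitened_tensor_eigenpairs_general (n k : ℕ)
    (f : Fin k → Fin n → ℝ)
    (α : Fin k → ℝ) (hα : ∀ i, 0 < α i)
    (W : Matrix (Fin n) (Fin k) ℝ)
    (hW : Wᵀ * (∑ i, α i • vecMulVec (f i) (f i)) * W = 1)
    (j p : Fin k) :
    ∑ q, ∑ r,
        (∑ i, α i * Wᵀ.mulVec (f i) p * Wᵀ.mulVec (f i) q * Wᵀ.mulVec (f i) r) *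
          (Real.sqrt (α j) • Wᵀ.mulVec (f j)) q *
          (Real.sqrt (α j) • Wᵀ.mulVec (f j)) r =
      α j ^ (-(1 : ℝ) / 2) * (Real.sqrt (α j) • Wᵀ.mulVec (f j)) p := by
  have horth : ∀ i i', Wᵀ *ᵥ f i ⬝ᵥ Wᵀ *ᵥ f i' = if i = i' then (α i)⁻¹ else 0 :=
    dotProduct_eq_ite_of_sum_smul_vecMulVec_eq_one (fun i => (hα i).ne') <| by
      simpa only [mul_sum_smul_vecMulVec_mul, ← mulVec_transpose] using hW
  rw [sum_sum_weightedCube_mul_mul, sum_weightedCube_dotProduct_smul_sq α _ horth,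
    Pi.smul_apply, smul_eq_mul, neg_div, Real.rpow_neg (hα j).le, ← Real.sqrt_eq_rpow]
  have hsqrt : Real.sqrt (α j) ≠ 0 := (Real.sqrt_pos.mpr (hα j)).ne'
  field_simp
  rw [Real.sq_sqrt (hα j).le, mul_div_cancel_left₀ _ (hα j).ne']

/-- The whitened third moment is orthogonally decomposable: with
`M = Σ_i α̂_i f_i f_iᵀ`, `Wᵀ M W = I`, `T_{pqr} = Σ_i α̂_i (Wᵀf_i)_p (Wᵀf_i)_q (Wᵀf_i)_r`,
`v_i = √α̂_i Wᵀ f_i` and `λ_i = α̂_i^{-1/2}`, one has `T(I, v_j, v_j) = λ_j v_j`. -/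
theorem whitened_tensor_eigenpairs (n k : ℕ) (hk : 0 < k) (hkn : k ≤ n)
    (f : Fin k → Fin n → ℝ) (hf : LinearIndependent ℝ f)
    (α : Fin k → ℝ) (hα : ∀ i, 0 < α i)
    (W : Matrix (Fin n) (Fin k) ℝ)
    (hW : Wᵀ * (∑ i, α i • vecMulVec (f i) (f i)) * W = 1)
    (j p : Fin k) :
    ∑ q, ∑ r,
        (∑ i, α i * Wᵀ.mulVec (f i) p * Wᵀ.mulVec (f i) q * Wᵀ.mulVec (f i) r) *
          (Real.sqrt (α j) • Wᵀ.mulVec (f j)) q *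
          (Real.sqrt (α j) • Wᵀ.mulVec (f j)) r =
      α j ^ (-(1 : ℝ) / 2) * (Real.sqrt (α j) • Wᵀ.mulVec (f j)) p :=
  whitened_tensor_eigenpairs_general n k f α hα W hW j p
end

section
/- (Post-processing recovery of the components, un-whitening lemma.) Let k ≤ n, let f_1, …, f_k ∈ ℝ^n be linearly independent, let α̂_1, …, α̂_k > 0, let M := Σ_{i=1}^k α̂_i f_i f_iᵀ, and let W ∈ ℝ^{n×k} satisfy Wᵀ M W = I_k, with every column of W lying in span{f_1, …, f_k}. Then Wᵀ W is invertible, and with v_i := √(α̂_i) Wᵀ f_i and λ_i := α̂_i^{−1/2} one has W (WᵀW)^{−1} (λ_i v_i) = f_i for every i ∈ {1,…,k}; equivalently, W(WᵀW)^{−1}Wᵀ f_i = f_i, so applying the pseudoinverse (Wᵀ)† = W(WᵀW)^{−1} to the scaled tensor eigenvectors recovers the components f_i exactly. -/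
/-!
The whitening identity `(Wᵀ M) W = 1` gives `W` a left inverse, so `W` is injective and
hence `WᵀW` is invertible. An injective `W` with `k` columns inside `span{f_1, …, f_k}` has
a range of dimension `k`, so its range is that whole span. On the range of `W` the map
`W (WᵀW)⁻¹ Wᵀ` is the identity, and the scalars `α̂_i^{-1/2}` and `√α̂_i` cancel.
-/

open Matrix

namespace Matrix

variable {m n R : Type*} [Fintype n]

theorem mulVec_injective_of_mul_eq_one [Fintype m] [DecidableEq n] [CommSemiring R]
    {A : Matrix m n R} {B : Matrix n m R} (h : B * A = 1) :
    Function.Injective A.mulVec := fun x y hxy => by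
  simpa only [mulVec_mulVec, h, one_mulVec] using congrArg (B *ᵥ ·) hxy

theorem isUnit_det_transpose_mul_self_of_injective [Fintype m] [DecidableEq n] [Field R]
    [LinearOrder R] [IsStrictOrderedRing R] {A : Matrix m n R}
    (hA : Function.Injective A.mulVec) : IsUnit (Aᵀ * A).det := by
  rw [← isUnit_iff_isUnit_det, ← mulVec_injective_iff_isUnit]
  have hker := ker_mulVecLin_transpose_mul_self A
  rwa [(LinearMap.ker_eq_bot (f := A.mulVecLin)).mpr hA, LinearMap.ker_eq_bot] at hker

theorem range_mulVecLin_eq_span_of_injective [Fintype m] [Field R] {A : Matrix m n R}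
    {f : n → m → R} (hA : Function.Injective A.mulVec)
    (hcol : ∀ j, (fun i => A i j) ∈ Submodule.span R (Set.range f)) :
    LinearMap.range A.mulVecLin = Submodule.span R (Set.range f) := by
  apply Submodule.eq_of_le_of_finrank_le
  · rw [range_mulVecLin, Submodule.span_le]
    rintro _ ⟨j, rfl⟩
    exact hcol j
  · calc Module.finrank R (Submodule.span R (Set.range f))
        ≤ Fintype.card n := finrank_range_le_card f
      _ = Module.finrank R (LinearMap.range A.mulVecLin) := by
        rw [LinearMap.finrank_range_of_inj hA, Module.finrank_fintype_fun_eq_card]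

theorem mul_inv_mulVec_transpose_mulVec_mulVec [Fintype m] [DecidableEq n] [CommRing R]
    {A : Matrix m n R} (hA : IsUnit (Aᵀ * A).det) (x : n → R) :
    (A * (Aᵀ * A)⁻¹) *ᵥ (Aᵀ *ᵥ (A *ᵥ x)) = A *ᵥ x := by
  rw [mulVec_mulVec, mulVec_mulVec, Matrix.mul_assoc _ Aᵀ A, nonsing_inv_mul_cancel_right _ _ hA]

end Matrix

theorem Real.rpow_neg_one_div_two_mul_sqrt {x : ℝ} (hx : 0 < x) :
    x ^ (-(1 : ℝ) / 2) * √x = 1 := by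
  rw [Real.sqrt_eq_rpow, ← Real.rpow_add hx]
  norm_num

theorem unwhitening_recovers_components_general (n k : ℕ)
    (f : Fin k → Fin n → ℝ)
    (α : Fin k → ℝ) (hα : ∀ i, 0 < α i)
    (W : Matrix (Fin n) (Fin k) ℝ)
    (hW : Wᵀ * (∑ i, α i • vecMulVec (f i) (f i)) * W = 1)
    (hWcol : ∀ j : Fin k, (fun p => W p j) ∈ Submodule.span ℝ (Set.range f)) :
    IsUnit (Wᵀ * W).det ∧
      ∀ i, (W * (Wᵀ * W)⁻¹).mulVec
          ((α i ^ (-(1 : ℝ) / 2)) • (Real.sqrt (α i) • Wᵀ.mulVec (f i))) = f i := by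
  have hinj : Function.Injective W.mulVec := mulVec_injective_of_mul_eq_one hW
  have hunit : IsUnit (Wᵀ * W).det := isUnit_det_transpose_mul_self_of_injective hinj
  refine ⟨hunit, fun i => ?_⟩
  obtain ⟨c, hc⟩ : f i ∈ LinearMap.range W.mulVecLin := by
    rw [range_mulVecLin_eq_span_of_injective hinj hWcol]
    exact Submodule.subset_span ⟨i, rfl⟩
  rw [smul_smul, Real.rpow_neg_one_div_two_mul_sqrt (hα i), one_smul, ← hc, mulVecLin_apply,
    mul_inv_mulVec_transpose_mulVec_mulVec hunit]

/-- Post-processing (un-whitening): if `Wᵀ M W = I` for `M = Σ_i α̂_i f_i f_iᵀ`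
and the columns of `W` lie in `span{f_1,…,f_k}`, then `Wᵀ W` is invertible and
`W (WᵀW)⁻¹ (λ_i v_i) = f_i` where `v_i = √α̂_i Wᵀ f_i` and `λ_i = α̂_i^{-1/2}`. -/
theorem unwhitening_recovers_components (n k : ℕ) (hk : 0 < k) (hkn : k ≤ n)
    (f : Fin k → Fin n → ℝ) (hf : LinearIndependent ℝ f)
    (α : Fin k → ℝ) (hα : ∀ i, 0 < α i)
    (W : Matrix (Fin n) (Fin k) ℝ)
    (hW : Wᵀ * (∑ i, α i • vecMulVec (f i) (f i)) * W = 1)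
    (hWcol : ∀ j : Fin k, (fun p => W p j) ∈ Submodule.span ℝ (Set.range f)) :
    IsUnit (Wᵀ * W).det ∧
      ∀ i, (W * (Wᵀ * W)⁻¹).mulVec
          ((α i ^ (-(1 : ℝ) / 2)) • (Real.sqrt (α i) • Wᵀ.mulVec (f i))) = f i :=
  unwhitening_recovers_components_general n k f α hα W hW hWcol
end

section
/- (Correctness of the randomized/Nyström whitening matrix.) Let F ∈ ℝ^{n×k} have rank k, set M := F Fᵀ, and let S ∈ ℝ^{n×k} be such that Ω := Sᵀ M S is invertible. Put O := M S. Then OᵀO is invertible, Ω is symmetric positive definite, and the matrix W := O (OᵀO)^{−1} Ω^{1/2}, where Ω^{1/2} is the unique symmetric positive semidefinite square root of Ω, satisfies Wᵀ M W = I_k. -/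
/-!
With `A := Fᵀ S` one has `Ω = AᵀA` and `O = F A`. Invertibility of `Ω` makes `A` invertible, and
full column rank makes `F` injective, so `OᵀO` and `Ω` are Gram matrices of injective maps, hence
positive definite. Moreover `O (OᵀO)⁻¹ = F (FᵀF)⁻¹ A⁻ᵀ`, whence `(O (OᵀO)⁻¹)ᵀ M (O (OᵀO)⁻¹) = Ω⁻¹`,
and any symmetric square root `R` of `Ω` gives `Wᵀ M W = R Ω⁻¹ R = 1`.
-/

open Matrix

namespace Matrix

variable {m n R : Type*} [Fintype m] [Fintype n]

omit [Fintype m] in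
theorem mulVec_injective_of_rank_eq_card [Field R] {A : Matrix m n R}
    (h : A.rank = Fintype.card n) : Function.Injective A.mulVec := by
  rw [mulVec_injective_iff, linearIndependent_iff_card_eq_finrank_span, ← h,
    rank_eq_finrank_span_cols, Set.finrank]

theorem posDef_transpose_mul_self [CommRing R] [PartialOrder R] [StarRing R] [TrivialStar R]
    [StarOrderedRing R] [NoZeroDivisors R] (A : Matrix m n R)
    (hA : Function.Injective A.mulVec) : (Aᵀ * A).PosDef := by
  simpa only [conjTranspose_eq_transpose_of_trivial] using PosDef.conjTranspose_mul_self A hA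

theorem mul_inv_mul_self_mul_eq_one [CommRing R] [DecidableEq n] {A : Matrix n n R}
    (hA : IsUnit A.det) : A * (A * A)⁻¹ * A = 1 := by
  have := A.invertibleOfIsUnitDet hA
  rw [mul_inv_rev, Matrix.mul_assoc, Matrix.mul_assoc, inv_mul_of_invertible, Matrix.mul_one,
    mul_inv_of_invertible]

theorem transpose_mul_mul_eq_inv_of_mul_inv_gram [CommRing R] [DecidableEq n] (F : Matrix m n R)
    {A : Matrix n n R}
    (hF : IsUnit (Fᵀ * F).det) (hA : IsUnit A.det) :
    (F * A * ((F * A)ᵀ * (F * A))⁻¹)ᵀ * (F * Fᵀ) * (F * A * ((F * A)ᵀ * (F * A))⁻¹) =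
      (Aᵀ * A)⁻¹ := by
  have := A.invertibleOfIsUnitDet hA
  have := (Fᵀ * F).invertibleOfIsUnitDet hF
  have := invertibleTranspose A
  have hP : F * A * ((F * A)ᵀ * (F * A))⁻¹ = F * (Fᵀ * F)⁻¹ * (Aᵀ)⁻¹ := by
    rw [transpose_mul, show Aᵀ * Fᵀ * (F * A) = Aᵀ * (Fᵀ * F) * A by simp only [Matrix.mul_assoc],
      mul_inv_rev, mul_inv_rev, Matrix.mul_assoc F, mul_inv_cancel_left_of_invertible,
      Matrix.mul_assoc]
  have hG : (Fᵀ * F)ᵀ = Fᵀ * F := by rw [transpose_mul, transpose_transpose]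
  rw [hP]
  simp only [transpose_mul, transpose_nonsing_inv, transpose_transpose, hG, Matrix.mul_assoc]
  rw [← Matrix.mul_assoc Fᵀ F, ← Matrix.mul_assoc Fᵀ F, inv_mul_cancel_left_of_invertible,
    mul_inv_cancel_left_of_invertible, mul_inv_rev]

end Matrix

/-- Correctness of the randomized (Nyström) whitening matrix: with `M = F Fᵀ`,
`F` of full column rank `k`, `Ω = Sᵀ M S` invertible and `O = M S`, the matrix
`OᵀO` is invertible, `Ω` is symmetric positive definite, and
`W = O (OᵀO)⁻¹ Ω^{1/2}` (for `Ω^{1/2}` the unique symmetric PSD square root of `Ω`)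
satisfies `Wᵀ M W = I_k`. -/
theorem nystrom_whitening (n k : ℕ) (F S : Matrix (Fin n) (Fin k) ℝ)
    (hF : F.rank = k)
    (hΩ : IsUnit (Sᵀ * (F * Fᵀ) * S).det) :
    IsUnit ((((F * Fᵀ) * S)ᵀ * ((F * Fᵀ) * S)).det) ∧
      (Sᵀ * (F * Fᵀ) * S).PosDef ∧
      ∀ R : Matrix (Fin k) (Fin k) ℝ, R.PosSemidef →
        R * R = Sᵀ * (F * Fᵀ) * S →
        (((F * Fᵀ) * S) * (((F * Fᵀ) * S)ᵀ * ((F * Fᵀ) * S))⁻¹ * R)ᵀ * (F * Fᵀ) *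
            (((F * Fᵀ) * S) * (((F * Fᵀ) * S)ᵀ * ((F * Fᵀ) * S))⁻¹ * R) = 1 := by
  set A := Fᵀ * S
  have hΩA : Sᵀ * (F * Fᵀ) * S = Aᵀ * A := by
    simp only [A, transpose_mul, transpose_transpose, Matrix.mul_assoc]
  have hO : F * Fᵀ * S = F * A := Matrix.mul_assoc F Fᵀ S
  have hF_inj : Function.Injective F.mulVec := mulVec_injective_of_rank_eq_card (by simpa using hF)
  have hA : IsUnit A.det := isUnit_of_mul_isUnit_right (by rwa [hΩA, det_mul, det_transpose] at hΩ)
  have hA_inj : Function.Injective A.mulVec :=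
    mulVec_injective_iff_isUnit.mpr ((isUnit_iff_isUnit_det A).mpr hA)
  have hFA_inj : Function.Injective (F * A).mulVec := by
    rw [show (F * A).mulVec = F.mulVec ∘ A.mulVec from funext fun x => (mulVec_mulVec x F A).symm]
    exact hF_inj.comp hA_inj
  refine ⟨hO ▸ (posDef_transpose_mul_self _ hFA_inj).det_pos.ne'.isUnit,
    hΩA ▸ posDef_transpose_mul_self A hA_inj, fun R hR hRR => ?_⟩
  have hR_det : IsUnit R.det := isUnit_of_mul_isUnit_right (by rwa [← det_mul, hRR])
  have hRt : Rᵀ = R := by simpa only [conjTranspose_eq_transpose_of_trivial] using hR.1.eq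
  have hG : IsUnit (Fᵀ * F).det := (posDef_transpose_mul_self F hF_inj).det_pos.ne'.isUnit
  rw [hO]
  set P := F * A * ((F * A)ᵀ * (F * A))⁻¹ with hP
  calc (P * R)ᵀ * (F * Fᵀ) * (P * R) = R * (Pᵀ * (F * Fᵀ) * P) * R := by
        simp only [transpose_mul, hRt, Matrix.mul_assoc]
    _ = R * (R * R)⁻¹ * R := by rw [hP, transpose_mul_mul_eq_inv_of_mul_inv_gram F hG hA, hRR, hΩA]
    _ = 1 := mul_inv_mul_self_mul_eq_one hR_det
end

section
/- (Alignment of the symmetrization matrices: Z_B F_B = F_A and Z_C F_C = F_A.) Let F_A ∈ ℝ^{n_A×k}, F_B ∈ ℝ^{n_B×k}, F_C ∈ ℝ^{n_C×k} with F_B and F_C of full column rank k, and let D ∈ ℝ^{k×k} be invertible. Define Pairs(A,C) := F_A D F_Cᵀ, Pairs(B,C) := F_B D F_Cᵀ, Pairs(A,B) := F_A D F_Bᵀ, Pairs(C,B) := F_C D F_Bᵀ, and let Pairs(B,C)† := F_C(F_CᵀF_C)^{−1}D^{−1}(F_BᵀF_B)^{−1}F_Bᵀ and Pairs(C,B)†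 := F_B(F_BᵀF_B)^{−1}D^{−1}(F_CᵀF_C)^{−1}F_Cᵀ (their Moore–Penrose pseudoinverses). Then Z_B := Pairs(A,C)·Pairs(B,C)† satisfies Z_B F_B = F_A, and Z_C := Pairs(A,B)·Pairs(C,B)† satisfies Z_C F_C = F_A. -/
open Matrix

namespace Matrix

variable {l m n p K R : Type*} [Fintype m] [Fintype n] [Fintype p] [DecidableEq n]

theorem isUnit_of_rank_eq_card [Field K] {A : Matrix n n K} (h : A.rank = Fintype.card n) :
    IsUnit A := by
  rw [← mulVec_surjective_iff_isUnit]
  have hrange : LinearMap.range A.mulVecLin = ⊤ :=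
    Submodule.eq_top_of_finrank_eq (by rwa [Module.finrank_fintype_fun_eq_card])
  exact LinearMap.range_eq_top.mp hrange

theorem isUnit_det_transpose_mul_self_of_rank_eq_card [Field K] [LinearOrder K]
    [IsStrictOrderedRing K] {A : Matrix m n K} (h : A.rank = Fintype.card n) :
    IsUnit (Aᵀ * A).det :=
  (isUnit_iff_isUnit_det _).1 (isUnit_of_rank_eq_card (by rw [rank_transpose_mul_self, h]))

theorem mul_mul_transpose_mul_pinv_mul_eq [CommRing R] (FA : Matrix l n R)
    (FB : Matrix m n R) (FC : Matrix p n R) (D : Matrix n n R)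
    (hFB : IsUnit (FBᵀ * FB).det) (hFC : IsUnit (FCᵀ * FC).det) (hD : IsUnit D.det) :
    FA * D * FCᵀ * (FC * (FCᵀ * FC)⁻¹ * D⁻¹ * (FBᵀ * FB)⁻¹ * FBᵀ) * FB = FA :=
  calc FA * D * FCᵀ * (FC * (FCᵀ * FC)⁻¹ * D⁻¹ * (FBᵀ * FB)⁻¹ * FBᵀ) * FB
      = FA * (D * ((FCᵀ * FC) * (FCᵀ * FC)⁻¹) * D⁻¹) * ((FBᵀ * FB)⁻¹ * (FBᵀ * FB)) := by
        simp only [Matrix.mul_assoc]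
    _ = FA := by
        rw [mul_nonsing_inv _ hFC, Matrix.mul_one, mul_nonsing_inv _ hD, Matrix.mul_one,
          nonsing_inv_mul _ hFB, Matrix.mul_one]

end Matrix

/-- Alignment of the symmetrization matrices in the MMSB moment computation:
`Z_B F_B = F_A` and `Z_C F_C = F_A`, where
`Z_B = Pairs(A,C) Pairs(B,C)†` and `Z_C = Pairs(A,B) Pairs(C,B)†` with
`Pairs(Y₁,Y₂) = F_{Y₁} D F_{Y₂}ᵀ`. -/
theorem symmetrization_alignment (nA nB nC k : ℕ)
    (FA : Matrix (Fin nA) (Fin k) ℝ)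
    (FB : Matrix (Fin nB) (Fin k) ℝ)
    (FC : Matrix (Fin nC) (Fin k) ℝ)
    (hFB : FB.rank = k) (hFC : FC.rank = k)
    (D : Matrix (Fin k) (Fin k) ℝ) (hD : IsUnit D.det) :
    let pairsACpinvBC := (FA * D * FCᵀ) *
      (FC * (FCᵀ * FC)⁻¹ * D⁻¹ * (FBᵀ * FB)⁻¹ * FBᵀ)
    let pairsABpinvCB := (FA * D * FBᵀ) *
      (FB * (FBᵀ * FB)⁻¹ * D⁻¹ * (FCᵀ * FC)⁻¹ * FCᵀ)
    pairsACpinvBC * FB = FA ∧ pairsABpinvCB * FC = FA := by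
  have hGB : IsUnit (FBᵀ * FB).det :=
    isUnit_det_transpose_mul_self_of_rank_eq_card (by rwa [Fintype.card_fin])
  have hGC : IsUnit (FCᵀ * FC).det :=
    isUnit_det_transpose_mul_self_of_rank_eq_card (by rwa [Fintype.card_fin])
  exact ⟨mul_mul_transpose_mul_pinv_mul_eq FA FB FC D hGB hGC hD,
    mul_mul_transpose_mul_pinv_mul_eq FA FC FB D hGC hGB hD⟩
end

section
/- (Symmetrization yields the exact second-order moment: M2 = F_A D F_Aᵀ.) Let F_A ∈ ℝ^{n_A×k}, F_B ∈ ℝ^{n_B×k}, F_C ∈ ℝ^{n_C×k} with F_B and F_C of full column rank k, and let D ∈ ℝ^{k×k} be invertible. With Pairs(Y_1,Y_2) := F_{Y_1} D F_{Y_2}ᵀ, Pairs(B,C)† := F_C(F_CᵀF_C)^{−1}D^{−1}(F_BᵀF_B)^{−1}F_Bᵀ, Pairs(C,B)† := F_B(F_BᵀF_B)^{−1}D^{−1}(F_CᵀF_C)^{−1}F_Cᵀ, Z_B := Pairs(A,C)·Pairs(B,C)†, and Z_C := Pairs(A,B)·Pairs(C,B)†, one has Z_C · Pairs(C,B) ·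 Z_Bᵀ = F_A D F_Aᵀ. -/
/-! Full column rank makes `F_YᵀF_Y` invertible, so `F_Y (F_YᵀF_Y)⁻¹` is a right inverse of `F_Yᵀ`.
Hence in `Z_B` the factors `F_Cᵀ F_C (F_CᵀF_C)⁻¹` and `D D⁻¹` cancel, leaving
`Z_B = F_A (F_BᵀF_B)⁻¹ F_Bᵀ`, and symmetrically `Z_C = F_A (F_CᵀF_C)⁻¹ F_Cᵀ`. In
`Z_C F_C D F_Bᵀ Z_Bᵀ` these left pseudoinverses then absorb `F_C` and `F_Bᵀ`. -/

open Matrix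

namespace Matrix

variable {l m n p R : Type*} [Fintype m] [Fintype n] [DecidableEq n]

theorem isUnit_det_of_rank_eq_card [Field R] {A : Matrix n n R} (h : A.rank = Fintype.card n) :
    IsUnit A.det := by
  rw [← isUnit_iff_isUnit_det, ← mulVec_surjective_iff_isUnit]
  refine (LinearMap.range_eq_top (f := A.mulVecLin)).mp (Submodule.eq_top_of_finrank_eq ?_)
  rw [← rank, h, Module.finrank_fintype_fun_eq_card]

theorem isUnit_det_transpose_mul_self [Field R] [LinearOrder R] [IsStrictOrderedRing R]
    {A : Matrix m n R} (h : A.rank = Fintype.card n) : IsUnit (Aᵀ * A).det :=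
  isUnit_det_of_rank_eq_card (by rw [rank_transpose_mul_self, h])

section CommRing

variable [CommRing R]

theorem transpose_nonsing_inv_transpose_mul_self (A : Matrix m n R) :
    (Aᵀ * A)⁻¹ᵀ = (Aᵀ * A)⁻¹ := by
  rw [transpose_nonsing_inv, transpose_mul, transpose_transpose]

variable {A : Matrix m n R}

theorem transpose_mul_mul_nonsing_inv_cancel_left (hA : IsUnit (Aᵀ * A).det)
    (B : Matrix n p R) : Aᵀ * (A * ((Aᵀ * A)⁻¹ * B)) = B := by
  rw [← Matrix.mul_assoc Aᵀ, mul_nonsing_inv_cancel_left _ _ hA]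

theorem nonsing_inv_mul_transpose_mul_cancel_left (hA : IsUnit (Aᵀ * A).det)
    (B : Matrix n p R) : (Aᵀ * A)⁻¹ * (Aᵀ * (A * B)) = B := by
  rw [← Matrix.mul_assoc Aᵀ, nonsing_inv_mul_cancel_left _ _ hA]

theorem mul_mul_transpose_mul_pinv [Fintype l] {D : Matrix n n R} (hA : IsUnit (Aᵀ * A).det)
    (hD : IsUnit D.det) (X : Matrix l n R) (G : Matrix n n R) (Y : Matrix n p R) :
    X * D * Aᵀ * (A * (Aᵀ * A)⁻¹ * D⁻¹ * G * Y) = X * (G * Y) := by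
  simp only [Matrix.mul_assoc]
  rw [transpose_mul_mul_nonsing_inv_cancel_left hA, mul_nonsing_inv_cancel_left _ _ hD]

end CommRing

end Matrix

/-- Symmetrization yields the exact second-order moment:
`Z_C · Pairs(C,B) · Z_Bᵀ = F_A D F_Aᵀ`, where `Z_B = Pairs(A,C) Pairs(B,C)†`,
`Z_C = Pairs(A,B) Pairs(C,B)†`, and `Pairs(Y₁,Y₂) = F_{Y₁} D F_{Y₂}ᵀ`. -/
theorem symmetrized_second_moment (nA nB nC k : ℕ)
    (FA : Matrix (Fin nA) (Fin k) ℝ)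
    (FB : Matrix (Fin nB) (Fin k) ℝ)
    (FC : Matrix (Fin nC) (Fin k) ℝ)
    (hFB : FB.rank = k) (hFC : FC.rank = k)
    (D : Matrix (Fin k) (Fin k) ℝ) (hD : IsUnit D.det) :
    let ZB := (FA * D * FCᵀ) *
      (FC * (FCᵀ * FC)⁻¹ * D⁻¹ * (FBᵀ * FB)⁻¹ * FBᵀ)
    let ZC := (FA * D * FBᵀ) *
      (FB * (FBᵀ * FB)⁻¹ * D⁻¹ * (FCᵀ * FC)⁻¹ * FCᵀ)
    ZC * (FC * D * FBᵀ) * ZBᵀ = FA * D * FAᵀ := by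
  intro ZB ZC
  have hB : IsUnit (FBᵀ * FB).det := isUnit_det_transpose_mul_self (by simpa using hFB)
  have hC : IsUnit (FCᵀ * FC).det := isUnit_det_transpose_mul_self (by simpa using hFC)
  have hZB : ZB = FA * ((FBᵀ * FB)⁻¹ * FBᵀ) := mul_mul_transpose_mul_pinv hC hD _ _ _
  have hZC : ZC = FA * ((FCᵀ * FC)⁻¹ * FCᵀ) := mul_mul_transpose_mul_pinv hB hD _ _ _
  rw [hZB, hZC, transpose_mul, transpose_mul, transpose_nonsing_inv_transpose_mul_self,
    transpose_transpose]
  simp only [Matrix.mul_assoc]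
  rw [nonsing_inv_mul_transpose_mul_cancel_left hC, transpose_mul_mul_nonsing_inv_cancel_left hB]
end
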